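/- Limit claim for the off-diagonal entry (second claim in the proof of Proposition 3.1): fix a meeting function ρ, a network g ∈ S, a coordinate e* ∈ E, set w = flip e* g, and fix φ ∈ (0,1). Let (Fₙ) be a sequence of acceptance functions (each satisfying the parameter constraints) with Fₙ g e* = φ for all n (hence Fₙ w e* = 1 − φ), and assume that as n → ∞: Fₙ w e → 0 for every e ≠ e*, and Fₙ g e → 0 for every e ≠ e*. Write Πₙ = Π(ρ, Fₙ) and define L : ℕ → ℝ recursively by L 0 = 0 and L (τ+1) = (1 − L τ) * (ρ e* g) * φ + (L τ) * (1 − (ρ e* w) * (1 − φ)). Then for every natural number τ, ((Πₙ)^τ) g w → L τ and ((Πₙ)^τ) g g → 1 − L τ as n → ∞. -/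

import Mathlib

open Matrix Finset Filter

/-- Flip the link `e` in network `g`. -/
def flipL {E : Type*} [DecidableEq E] (e : E) (g : E → Bool) : E → Bool :=
  Function.update g e (!(g e))

/-- The one-step transition matrix of the network formation game. -/
noncomputable def netPi {E : Type*} [DecidableEq E] [Fintype E]
    (ρ : E → (E → Bool) → ℝ) (F : (E → Bool) → E → ℝ) :
    Matrix (E → Bool) (E → Bool) ℝ :=
  Matrix.of fun g w =>
    if g = w then ∑ e, ρ e g * (1 - F g e)
    else ∑ e, if w = flipL e g then ρ e g * F g e else 0

/-- A meeting function: strictly positive selection probabilities summing to one. -/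
def IsMeeting {E : Type*} [Fintype E] (ρ : E → (E → Bool) → ℝ) : Prop :=
  (∀ e g, 0 < ρ e g) ∧ ∀ g, ∑ e, ρ e g = 1

/-- An acceptance function: probabilities strictly between 0 and 1, complementary under flips. -/
def IsAcceptance {E : Type*} [DecidableEq E] (F : (E → Bool) → E → ℝ) : Prop :=
  (∀ g e, 0 < F g e ∧ F g e < 1) ∧ ∀ g e, F g e + F (flipL e g) e = 1

open Topology

/-!
Every transition from `g` or `w = flip e* g` that leaves `{g, w}` flips some `e ≠ e*`, whose
acceptance probability tends to `0`. So in the limit the chain started at `g` keeps its mass on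
`{g, w}` and moves there like the two-state chain with transition probabilities `ρ e* g * φ`
from `g` to `w` and `ρ e* w * (1 - φ)` from `w` to `g`, whose `(g, w)` entry after `τ` steps
satisfies the recursion of `L`. The only subtlety is that rows other than `g` and `w` need not
converge; they are harmless because the mass they receive tends to `0` and stochastic rows are
bounded.
-/

section RowStochastic

variable {σ : Type*} [Fintype σ] [DecidableEq σ] {M N : ℕ → Matrix σ σ ℝ}

lemma tendsto_apply_zero_of_tendsto_add_apply_one (hM : ∀ n, M n ∈ rowStochastic ℝ σ)
    {i a b s : σ} (hab : a ≠ b) (hsa : s ≠ a) (hsb : s ≠ b)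
    (h : Tendsto (fun n => M n i a + M n i b) atTop (𝓝 1)) :
    Tendsto (fun n => M n i s) atTop (𝓝 0) := by
  have hle : ∀ n, M n i s ≤ 1 - (M n i a + M n i b) := fun n => by
    have hsub : ∑ t ∈ {s, a, b}, M n i t ≤ ∑ t, M n i t :=
      sum_le_sum_of_subset_of_nonneg (subset_univ _)
        fun _ _ _ => nonneg_of_mem_rowStochastic (hM n)
    rw [sum_row_of_mem_rowStochastic (hM n), sum_insert (by simp [hsa, hsb]),
      sum_pair hab] at hsub
    linarith
  refine squeeze_zero (fun n => nonneg_of_mem_rowStochastic (hM n)) hle ?_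
  simpa using h.const_sub 1

lemma tendsto_mul_apply_of_concentrated (hM : ∀ n, M n ∈ rowStochastic ℝ σ)
    (hN : ∀ n, N n ∈ rowStochastic ℝ σ) {i a b j : σ} (hab : a ≠ b) {p q A B : ℝ}
    (hpq : p + q = 1) (ha : Tendsto (fun n => M n i a) atTop (𝓝 p))
    (hb : Tendsto (fun n => M n i b) atTop (𝓝 q))
    (hA : Tendsto (fun n => N n a j) atTop (𝓝 A))
    (hB : Tendsto (fun n => N n b j) atTop (𝓝 B)) :
    Tendsto (fun n => (M n * N n) i j) atTop (𝓝 (p * A + q * B)) := by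
  have hb_mem : b ∈ univ.erase a := mem_erase.2 ⟨hab.symm, mem_univ b⟩
  have hmass : Tendsto (fun n => M n i a + M n i b) atTop (𝓝 1) := hpq ▸ ha.add hb
  have hvanish : ∀ s ∈ (univ.erase a).erase b,
      Tendsto (fun n => M n i s * N n s j) atTop (𝓝 0) := fun s hs =>
    squeeze_zero
      (fun n => mul_nonneg (nonneg_of_mem_rowStochastic (hM n))
        (nonneg_of_mem_rowStochastic (hN n)))
      (fun n => mul_le_of_le_one_right (nonneg_of_mem_rowStochastic (hM n))
        (le_one_of_mem_rowStochastic (hN n)))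
      (tendsto_apply_zero_of_tendsto_add_apply_one hM hab
        (ne_of_mem_erase (mem_of_mem_erase hs)) (ne_of_mem_erase hs) hmass)
  have hrest : Tendsto (fun n => ∑ s ∈ (univ.erase a).erase b, M n i s * N n s j)
      atTop (𝓝 0) := by
    simpa using tendsto_finsetSum _ hvanish
  have hsplit : ∀ n, (M n * N n) i j = M n i a * N n a j +
      (M n i b * N n b j + ∑ s ∈ (univ.erase a).erase b, M n i s * N n s j) :=
    fun n => by
      rw [add_sum_erase _ (fun s => M n i s * N n s j) hb_mem,
        add_sum_erase _ (fun s => M n i s * N n s j) (mem_univ a), mul_apply]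
  simpa only [hsplit, add_zero] using (ha.mul hA).add ((hb.mul hB).add hrest)

end RowStochastic

section Network

variable {E : Type*} [DecidableEq E]

lemma flipL_ne (e : E) (g : E → Bool) : flipL e g ≠ g := fun h => by
  simpa [flipL] using congrFun h e

lemma flipL_flipL (e : E) (g : E → Bool) : flipL e (flipL e g) = g := by
  simp [flipL]

lemma flipL_injective (g : E → Bool) : Function.Injective fun e : E => flipL e g := by
  intro e e' h
  by_contra hne
  simpa [flipL, Function.update_of_ne hne] using congrFun h e

variable [Fintype E]

lemma netPi_flipL (ρ : E → (E → Bool) → ℝ) (F : (E → Bool) → E → ℝ)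
    (g : E → Bool) (e : E) :
    netPi ρ F g (flipL e g) = ρ e g * F g e := by
  rw [netPi, of_apply, if_neg (flipL_ne e g).symm,
    sum_eq_single e (fun e' _ hne => if_neg fun h => hne (flipL_injective g h).symm)
      (fun h => absurd (mem_univ e) h), if_pos rfl]

lemma netPi_mem_rowStochastic {ρ : E → (E → Bool) → ℝ} {F : (E → Bool) → E → ℝ}
    (hρ : IsMeeting ρ) (hF : IsAcceptance F) : netPi ρ F ∈ rowStochastic ℝ (E → Bool) := by
  refine mem_rowStochastic_iff_sum.2 ⟨fun g w => ?_, fun g => ?_⟩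
  · rw [netPi, of_apply]
    split_ifs
    · exact sum_nonneg fun e _ => mul_nonneg (hρ.1 e g).le (by linarith [(hF.1 g e).2])
    · exact sum_nonneg fun e _ => by
        split_ifs
        exacts [mul_nonneg (hρ.1 e g).le (hF.1 g e).1.le, le_rfl]
  · have hoff : ∑ w ∈ univ.erase g, netPi ρ F g w = ∑ e, ρ e g * F g e := by
      rw [sum_congr rfl fun w hw => by rw [netPi, of_apply, if_neg (ne_of_mem_erase hw).symm],
        sum_comm]
      refine sum_congr rfl fun e _ => ?_
      rw [sum_ite_eq' _ _ (fun _ => ρ e g * F g e),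
        if_pos (mem_erase.2 ⟨flipL_ne e g, mem_univ _⟩)]
    rw [← add_sum_erase _ _ (mem_univ g), hoff, netPi, of_apply, if_pos rfl, ← sum_add_distrib]
    simpa only [mul_sub, mul_one, sub_add_cancel] using hρ.2 g

lemma tendsto_netPi_diag {ρ : E → (E → Bool) → ℝ} {F : ℕ → (E → Bool) → E → ℝ}
    {s : E → Bool} (hρ : ∑ e, ρ e s = 1) {e₀ : E} {c : ℝ} (hc : ∀ n, F n s e₀ = c)
    (hvanish : ∀ e, e ≠ e₀ → Tendsto (fun n => F n s e) atTop (𝓝 0)) :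
    Tendsto (fun n => netPi ρ (F n) s s) atTop (𝓝 (1 - ρ e₀ s * c)) := by
  have hsplit : ∀ n, netPi ρ (F n) s s
      = 1 - (ρ e₀ s * c + ∑ e ∈ univ.erase e₀, ρ e s * F n s e) := fun n => by
    rw [← hc n, add_sum_erase _ (fun e => ρ e s * F n s e) (mem_univ e₀), netPi, of_apply,
      if_pos rfl]
    simp only [mul_sub, mul_one, sum_sub_distrib, hρ]
  have hrest : Tendsto (fun n => ∑ e ∈ univ.erase e₀, ρ e s * F n s e) atTop (𝓝 0) := by
    simpa using tendsto_finsetSum (univ.erase e₀) fun e he =>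
      (hvanish e (ne_of_mem_erase he)).const_mul (ρ e s)
  simpa only [hsplit, add_zero] using (hrest.const_add (ρ e₀ s * c)).const_sub 1

end Network

theorem offdiagonal_limit_general {E : Type*} [DecidableEq E] [Fintype E]
    (ρ : E → (E → Bool) → ℝ) (hρ : IsMeeting ρ)
    (g : E → Bool) (estar : E) (φ : ℝ)
    (F : ℕ → (E → Bool) → E → ℝ) (hF : ∀ n, IsAcceptance (F n))
    (hfix : ∀ n, F n g estar = φ)
    (hw : ∀ e : E, e ≠ estar → Tendsto (fun n => F n (flipL estar g) e) atTop (nhds 0))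
    (hg : ∀ e : E, e ≠ estar → Tendsto (fun n => F n g e) atTop (nhds 0))
    (L : ℕ → ℝ) (hL0 : L 0 = 0)
    (hLrec : ∀ τ : ℕ, L (τ + 1) =
      (1 - L τ) * (ρ estar g * φ) + L τ * (1 - ρ estar (flipL estar g) * (1 - φ))) :
    ∀ τ : ℕ,
      Tendsto (fun n => (netPi ρ (F n) ^ τ) g (flipL estar g)) atTop (nhds (L τ)) ∧
      Tendsto (fun n => (netPi ρ (F n) ^ τ) g g) atTop (nhds (1 - L τ)) := by
  set w := flipL estar g
  have hgw : g ≠ w := (flipL_ne estar g).symm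
  have hFw : ∀ n, F n w estar = 1 - φ := fun n => by linarith [(hF n).2 g estar, hfix n]
  have hP : ∀ n, netPi ρ (F n) ∈ rowStochastic ℝ (E → Bool) :=
    fun n => netPi_mem_rowStochastic hρ (hF n)
  have hPgw : ∀ n, netPi ρ (F n) g w = ρ estar g * φ := fun n => by
    rw [netPi_flipL, hfix]
  have hPwg : ∀ n, netPi ρ (F n) w g = ρ estar w * (1 - φ) := fun n => by
    rw [← hFw, ← netPi_flipL, flipL_flipL]
  have hPgg := tendsto_netPi_diag (hρ.2 g) hfix hg
  have hPww := tendsto_netPi_diag (hρ.2 w) hFw hw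
  intro τ
  induction τ with
  | zero => simp [hL0, one_apply, hgw]
  | succ τ ih =>
    have hPτ : ∀ n, netPi ρ (F n) ^ τ ∈ rowStochastic ℝ (E → Bool) :=
      fun n => pow_mem (hP n) τ
    simp only [pow_succ]
    constructor
    · rw [hLrec]
      exact tendsto_mul_apply_of_concentrated hPτ hP hgw (by ring) ih.2 ih.1
        (by simpa only [hPgw] using tendsto_const_nhds) hPww
    · convert tendsto_mul_apply_of_concentrated hPτ hP hgw (by ring) ih.2 ih.1 hPgg
        (by simpa only [hPwg] using tendsto_const_nhds) using 2
      rw [hLrec]; ring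

/-- Limit claim for the off-diagonal entry (second claim in the proof of Proposition 3.1):
in the limit where all acceptance probabilities except at `e*` vanish (and the acceptance
probability at `e*` from `g` is held fixed at `φ`), `(Π^τ) g w → L τ` and
`(Π^τ) g g → 1 - L τ`, where `L` is given by the stated recursion. -/
theorem offdiagonal_limit {E : Type*} [DecidableEq E] [Fintype E] [Nonempty E]
    (ρ : E → (E → Bool) → ℝ) (hρ : IsMeeting ρ)
    (g : E → Bool) (estar : E) (φ : ℝ) (hφ : 0 < φ ∧ φ < 1)
    (F : ℕ → (E → Bool) → E → ℝ) (hF : ∀ n, IsAcceptance (F n))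
    (hfix : ∀ n, F n g estar = φ)
    (hw : ∀ e : E, e ≠ estar → Tendsto (fun n => F n (flipL estar g) e) atTop (nhds 0))
    (hg : ∀ e : E, e ≠ estar → Tendsto (fun n => F n g e) atTop (nhds 0))
    (L : ℕ → ℝ) (hL0 : L 0 = 0)
    (hLrec : ∀ τ : ℕ, L (τ + 1) =
      (1 - L τ) * (ρ estar g * φ) + L τ * (1 - ρ estar (flipL estar g) * (1 - φ))) :
    ∀ τ : ℕ,
      Tendsto (fun n => (netPi ρ (F n) ^ τ) g (flipL estar g)) atTop (nhds (L τ)) ∧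
      Tendsto (fun n => (netPi ρ (F n) ^ τ) g g) atTop (nhds (1 - L τ)) :=
  offdiagonal_limit_general ρ hρ g estar φ F hF hfix hw hg L hL0 hLrec
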